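/- arXiv:2504.21643 — 2 statements merged into one kernel-verified Lean document; each statement's English description precedes it below -/
import Mathlib

section
/- More generally, if h : [0,∞) → ℝ is differentiable, h(0) ≥ 0, and h'(t) ≥ −α(h(t)) for all t, where α : ℝ → ℝ is a locally Lipschitz, strictly increasing function with α(0) = 0 (an extended class-K function), then h(t) ≥ 0 for all t ≥ 0. -/
/-- General forward invariance: if h is differentiable on [0,∞), h(0) ≥ 0, and
h'(t) ≥ −α(h(t)) where α is a locally Lipschitz class-K function
(α strictly increasing with α(0) = 0), then h(t) ≥ 0 for all t ≥ 0. -/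
theorem classK_comparison_forward_invariance
    (α : ℝ → ℝ) (hlip : LocallyLipschitz α)
    (hmono : StrictMono α) (hα0 : α 0 = 0)
    (h : ℝ → ℝ)
    (hdiff : ∀ t, 0 ≤ t → DifferentiableAt ℝ h t)
    (hineq : ∀ t, 0 ≤ t → -α (h t) ≤ deriv h t)
    (h0 : 0 ≤ h 0) :
    ∀ t, 0 ≤ t → 0 ≤ h t := by
  intro t ht
  by_contra hneg
  push_neg at hneg
  have hcontOn : ContinuousOn h (Set.Icc 0 t) := fun u hu =>
    (hdiff u hu.1).continuousAt.continuousWithinAt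
  set S : Set ℝ := Set.Icc 0 t ∩ h ⁻¹' Set.Ici 0 with hSdef
  have hSclosed : IsClosed S :=
    hcontOn.preimage_isClosed_of_isClosed isClosed_Icc isClosed_Ici
  have hS0 : (0 : ℝ) ∈ S := ⟨⟨le_refl 0, ht⟩, h0⟩
  have hSbdd : BddAbove S := ⟨t, fun u hu => hu.1.2⟩
  set s := sSup S with hs
  have hsS : s ∈ S := hSclosed.csSup_mem ⟨0, hS0⟩ hSbdd
  have hs0 : 0 ≤ s := hsS.1.1
  have hst : s ≤ t := hsS.1.2
  have hhs : 0 ≤ h s := hsS.2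
  have hslt : s < t :=
    lt_of_le_of_ne hst fun heq => absurd (heq ▸ hhs) (not_le.2 hneg)
  -- On (s, t], h is negative
  have hIoc : ∀ u ∈ Set.Ioc s t, h u < 0 := by
    intro u hu
    by_contra hc
    push_neg at hc
    have : u ∈ S := ⟨⟨le_trans hs0 hu.1.le, hu.2⟩, hc⟩
    exact absurd (le_csSup hSbdd this) (not_le.2 hu.1)
  -- deriv h ≥ 0 on the interior
  have hderiv : ∀ u ∈ Set.Ioo s t, 0 ≤ deriv h u := by
    intro u hu
    have hu0 : 0 ≤ u := le_trans hs0 hu.1.le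
    have hhu : h u < 0 := hIoc u ⟨hu.1, hu.2.le⟩
    have : α (h u) < 0 := hα0 ▸ hmono hhu
    linarith [hineq u hu0]
  have hmonoOn : MonotoneOn h (Set.Icc s t) := by
    apply monotoneOn_of_deriv_nonneg (convex_Icc s t)
    · exact hcontOn.mono (Set.Icc_subset_Icc_left hs0)
    · intro u hu
      rw [interior_Icc] at hu
      exact (hdiff u (le_trans hs0 hu.1.le)).differentiableWithinAt
    · intro u hu
      rw [interior_Icc] at hu
      exact hderiv u hu
  have := hmonoOn (Set.left_mem_Icc.2 hst) (Set.right_mem_Icc.2 hst) hst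
  linarith
end

section
/- For the unicycle with fixed speed v > 0, if h(p(0)) ≥ 0 and at every time the constraint 2⟨p − o, (cos θ, sin θ)⟩·v + α(‖p−o‖² − d²) ≥ 0 holds, then ‖p(t) − o‖ ≥ d for all t ≥ 0. -/
/-! The barrier `h = ‖p − o‖² − d²` satisfies `ḣ + α h ≥ 0` along the trajectory, since `ḣ` is
exactly the first term of the CBF constraint. Hence `e^{α t} h(t)` is nondecreasing, so `h` stays
nonnegative once `h(0) ≥ 0`. -/

open Set Real

lemma monotoneOn_exp_mul_of_hasDerivAt {h h' : ℝ → ℝ} (α : ℝ)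
    (hderiv : ∀ t, 0 ≤ t → HasDerivAt h (h' t) t) (hineq : ∀ t, 0 ≤ t → 0 ≤ h' t + α * h t) :
    MonotoneOn (fun t => exp (α * t) * h t) (Ici 0) := by
  have hg : ∀ t, 0 ≤ t →
      HasDerivAt (fun t => exp (α * t) * h t) (exp (α * t) * (h' t + α * h t)) t := by
    intro t ht
    have hexp : HasDerivAt (fun t => exp (α * t)) (exp (α * t) * α) t :=
      ((hasDerivAt_id t).const_mul α).exp.congr_deriv (by simp)
    exact (hexp.mul (hderiv t ht)).congr_deriv (by ring)
  refine monotoneOn_of_hasDerivWithinAt_nonneg (f' := fun t => exp (α * t) * (h' t + α * h t))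
    (convex_Ici 0) (fun t ht => (hg t ht).continuousAt.continuousWithinAt) ?_ ?_
  all_goals
    rw [interior_Ici]
    intro t ht
  · exact (hg t ht.le).hasDerivWithinAt
  · exact mul_nonneg (exp_pos _).le (hineq t ht.le)

lemma nonneg_of_hasDerivAt_add_mul_nonneg {h h' : ℝ → ℝ} (α : ℝ)
    (hderiv : ∀ t, 0 ≤ t → HasDerivAt h (h' t) t) (hineq : ∀ t, 0 ≤ t → 0 ≤ h' t + α * h t)
    (h0 : 0 ≤ h 0) {t : ℝ} (ht : 0 ≤ t) : 0 ≤ h t := by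
  have hmono := monotoneOn_exp_mul_of_hasDerivAt α hderiv hineq self_mem_Ici ht ht
  simp only [mul_zero, exp_zero, one_mul] at hmono
  exact nonneg_of_mul_nonneg_right (h0.trans hmono) (exp_pos _)

lemma hasDerivAt_sub_sq_add_sub_sq_sub {x y : ℝ → ℝ} {x' y' t : ℝ} (a b c : ℝ)
    (hx : HasDerivAt x x' t) (hy : HasDerivAt y y' t) :
    HasDerivAt (fun s => (x s - a) ^ 2 + (y s - b) ^ 2 - c)
      (2 * ((x t - a) * x' + (y t - b) * y')) t := by
  have hxa := (hx.sub_const a).pow 2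
  have hyb := (hy.sub_const b).pow 2
  exact ((hxa.add hyb).sub_const c).congr_deriv <| by
    simp only [Nat.cast_ofNat, Nat.add_one_sub_one, pow_one]
    ring

theorem unicycle_cbf_safety_general
    (px py θ : ℝ → ℝ) (v ox oy d α : ℝ)
    (hd : 0 < d)
    (hpx : ∀ t, 0 ≤ t → HasDerivAt px (v * Real.cos (θ t)) t)
    (hpy : ∀ t, 0 ≤ t → HasDerivAt py (v * Real.sin (θ t)) t)
    (h0 : 0 ≤ (px 0 - ox) ^ 2 + (py 0 - oy) ^ 2 - d ^ 2)
    (hcbf : ∀ t, 0 ≤ t →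
      0 ≤ 2 * ((px t - ox) * Real.cos (θ t) + (py t - oy) * Real.sin (θ t)) * v +
        α * ((px t - ox) ^ 2 + (py t - oy) ^ 2 - d ^ 2)) :
    ∀ t, 0 ≤ t → d ≤ Real.sqrt ((px t - ox) ^ 2 + (py t - oy) ^ 2) := by
  intro t ht
  have hderiv : ∀ s, 0 ≤ s →
      HasDerivAt (fun s => (px s - ox) ^ 2 + (py s - oy) ^ 2 - d ^ 2)
        (2 * ((px s - ox) * Real.cos (θ s) + (py s - oy) * Real.sin (θ s)) * v) s :=
    fun s hs => (hasDerivAt_sub_sq_add_sub_sq_sub ox oy (d ^ 2) (hpx s hs) (hpy s hs)).congr_deriv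
      (by ring)
  have hsafe := nonneg_of_hasDerivAt_add_mul_nonneg α hderiv hcbf h0 ht
  exact (Real.le_sqrt' hd).2 (sub_nonneg.1 hsafe)

/-- For the unicycle with fixed speed v > 0: if h(p(0)) ≥ 0 and the CBF constraint
2⟨p − o, (cos θ, sin θ)⟩·v + α(‖p − o‖² − d²) ≥ 0 holds at every time t ≥ 0, then
the robot never enters the ball of radius d around the obstacle:
‖p(t) − o‖ ≥ d for all t ≥ 0. -/
theorem unicycle_cbf_safety
    (px py θ : ℝ → ℝ) (ω : ℝ → ℝ) (v ox oy d α : ℝ)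
    (hv : 0 < v) (hd : 0 < d) (hα : 0 < α)
    (hpx : ∀ t, 0 ≤ t → HasDerivAt px (v * Real.cos (θ t)) t)
    (hpy : ∀ t, 0 ≤ t → HasDerivAt py (v * Real.sin (θ t)) t)
    (hθ : ∀ t, 0 ≤ t → HasDerivAt θ (ω t) t)
    (h0 : 0 ≤ (px 0 - ox) ^ 2 + (py 0 - oy) ^ 2 - d ^ 2)
    (hcbf : ∀ t, 0 ≤ t →
      0 ≤ 2 * ((px t - ox) * Real.cos (θ t) + (py t - oy) * Real.sin (θ t)) * v +
        α * ((px t - ox) ^ 2 + (py t - oy) ^ 2 - d ^ 2)) :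
    ∀ t, 0 ≤ t → d ≤ Real.sqrt ((px t - ox) ^ 2 + (py t - oy) ^ 2) :=
  unicycle_cbf_safety_general px py θ v ox oy d α hd hpx hpy h0 hcbf
end
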